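/- Let (X, 𝒜, ν) be a measure space, d a positive integer, R > 0, and C, B ≥ 0. Let F : ℝᵈ × X → ℝᵈ be such that x ↦ F(z, x) is measurable for each z, and suppose that (a) for all z₁, z₂ ∈ ℝᵈ with |z₁| ≤ R and |z₂| ≤ R one has ∫_X |F(z₁, x) − F(z₂, x)|² ν(dx) ≤ C|z₁ − z₂|², and (b) ∫_X |F(0, x)|² ν(dx) ≤ B. Define the radial truncation F^R : ℝᵈ × X → ℝᵈ by F^R(z, x) = F(z, x) if |z| ≤ R, F^R(z, x) = ((2R − |z|)/R) · F(R·z/|z|, x) if R ≤ |z| ≤ 2R, and F^R(z, x) = 0 if |z| ≥ 2R. Then there exists a constant K ≥ 0 such that for all z₁, z₂ ∈ ℝᵈ, ∫_X |F^R(z₁, x) − F^R(z₂, x)|² ν(dx) ≤ K|z₁ − z₂|². -/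

import Mathlib

/-!
Writing `F^R(z, ·) = φ(z) • F(π z, ·)`, where `π` is the radial retraction onto the closed ball of
radius `R` (2-Lipschitz in any normed space) and `φ(z) = clamp₀¹((2R - ‖z‖)/R)` is a
`1/R`-Lipschitz cutoff, Minkowski's inequality in `L²(ν)` bounds the `L²` distance between
`F^R(z, ·)` and `F^R(w, ·)` by `(3√C + √B/R) ‖z - w‖`; squaring gives the claim.
-/

open MeasureTheory

/-- Radial truncation of `F : ℝᵈ × X → ℝᵈ` in its first variable at radius `R`:
`F^R(z,x) = F(z,x)` if `‖z‖ ≤ R`, `F^R(z,x) = ((2R - ‖z‖)/R) • F((R/‖z‖) • z, x)` if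
`R ≤ ‖z‖ ≤ 2R`, and `F^R(z,x) = 0` if `‖z‖ ≥ 2R`. -/
noncomputable def radialTruncF {E X V : Type*} [NormedAddCommGroup E] [NormedSpace ℝ E]
    [NormedAddCommGroup V] [NormedSpace ℝ V] (R : ℝ) (F : E → X → V) (z : E) (x : X) : V :=
  if ‖z‖ ≤ R then F z x
  else if ‖z‖ ≤ 2 * R then ((2 * R - ‖z‖) / R) • F ((R / ‖z‖) • z) x
  else 0

open scoped ENNReal

section radialScale

noncomputable def radialScale (R t : ℝ) : ℝ := if t ≤ R then 1 else R / t

variable {R : ℝ}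

lemma radialScale_nonneg (hR : 0 ≤ R) (t : ℝ) : 0 ≤ radialScale R t := by
  unfold radialScale; split_ifs with h
  · exact zero_le_one
  · exact div_nonneg hR (hR.trans (not_le.1 h).le)

lemma radialScale_le_one (hR : 0 ≤ R) (t : ℝ) : radialScale R t ≤ 1 := by
  unfold radialScale; split_ifs with h
  · exact le_rfl
  · exact div_le_one_of_le₀ (not_le.1 h).le (hR.trans (not_le.1 h).le)

lemma radialScale_mul_le (hR : 0 ≤ R) (t : ℝ) : radialScale R t * t ≤ R := by
  unfold radialScale; split_ifs with h
  · simpa using h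
  · rw [div_mul_cancel₀ _ (hR.trans_lt (not_le.1 h)).ne']

lemma abs_radialScale_sub_mul_le (hR : 0 < R) (s t : ℝ) :
    |radialScale R s - radialScale R t| * t ≤ |s - t| := by
  unfold radialScale
  split_ifs with h₁ h₂ h₂
  · simp [abs_nonneg]
  · push Not at h₂
    rw [abs_of_nonneg (sub_nonneg.2 ((div_le_one (hR.trans h₂)).2 h₂.le)), sub_mul,
      one_mul, div_mul_cancel₀ _ (hR.trans h₂).ne', abs_sub_comm]
    linarith [le_abs_self (t - s)]
  · push Not at h₁
    have hs' : 0 < s := hR.trans h₁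
    rw [abs_sub_comm, abs_of_nonneg (sub_nonneg.2 ((div_le_one hs').2 h₁.le))]
    calc (1 - R / s) * t = (s - R) / s * t := by field_simp
      _ ≤ (s - R) / s * s := by gcongr; linarith
      _ = s - R := div_mul_cancel₀ _ hs'.ne'
      _ ≤ |s - t| := by linarith [le_abs_self (s - t)]
  · push Not at h₁ h₂
    have hs' : 0 < s := hR.trans h₁
    have ht' : 0 < t := hR.trans h₂
    calc |R / s - R / t| * t = R / s * |t - s| := by
          rw [div_sub_div _ _ hs'.ne' ht'.ne', abs_div, abs_of_pos (mul_pos hs' ht')]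
          field_simp
          rw [abs_mul, abs_of_pos hR, abs_sub_comm]
      _ ≤ 1 * |s - t| := by
          rw [abs_sub_comm]
          gcongr
          exact (div_le_one hs').2 h₁.le
      _ = |s - t| := one_mul _

end radialScale

section radialCutoff

variable {E : Type*} [NormedAddCommGroup E] {R : ℝ}

noncomputable def radialCutoff (R : ℝ) (z : E) : ℝ :=
  Set.projIcc 0 1 zero_le_one ((2 * R - ‖z‖) / R)

lemma abs_radialCutoff_le_one (R : ℝ) (z : E) : |radialCutoff R z| ≤ 1 := by
  obtain ⟨h₀, h₁⟩ := (Set.projIcc 0 1 zero_le_one ((2 * R - ‖z‖) / R)).2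
  exact abs_le.2 ⟨by unfold radialCutoff; linarith, h₁⟩

lemma abs_radialCutoff_sub_le (hR : 0 < R) (z w : E) :
    |radialCutoff R z - radialCutoff R w| ≤ ‖z - w‖ / R := by
  refine (Set.abs_projIcc_sub_projIcc _).trans ?_
  rw [← sub_div, abs_div, abs_of_pos hR, sub_sub_sub_cancel_left, abs_sub_comm]
  gcongr
  exact abs_norm_sub_norm_le z w

end radialCutoff

section radialProj

variable {E : Type*} [NormedAddCommGroup E] [NormedSpace ℝ E] {R : ℝ}

noncomputable def radialProj (R : ℝ) (z : E) : E := radialScale R ‖z‖ • z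

lemma norm_radialProj_le (hR : 0 ≤ R) (z : E) : ‖radialProj R z‖ ≤ R := by
  rw [radialProj, norm_smul, Real.norm_of_nonneg (radialScale_nonneg hR _)]
  exact radialScale_mul_le hR _

lemma norm_radialProj_sub_le (hR : 0 < R) (z w : E) :
    ‖radialProj R z - radialProj R w‖ ≤ 2 * ‖z - w‖ := by
  have hdecomp : radialProj R z - radialProj R w =
      radialScale R ‖z‖ • (z - w) + (radialScale R ‖z‖ - radialScale R ‖w‖) • w := by
    simp only [radialProj]; module
  calc ‖radialProj R z - radialProj R w‖
      ≤ |radialScale R ‖z‖| * ‖z - w‖ + |radialScale R ‖z‖ - radialScale R ‖w‖| * ‖w‖ := by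
        rw [hdecomp]
        refine (norm_add_le _ _).trans_eq ?_
        rw [norm_smul, norm_smul, Real.norm_eq_abs, Real.norm_eq_abs]
    _ ≤ 1 * ‖z - w‖ + |‖z‖ - ‖w‖| := by
        gcongr
        · rw [abs_of_nonneg (radialScale_nonneg hR.le _)]
          exact radialScale_le_one hR.le _
        · exact abs_radialScale_sub_mul_le hR _ _
    _ ≤ 2 * ‖z - w‖ := by linarith [abs_norm_sub_norm_le z w]

lemma radialTruncF_eq_smul {X V : Type*} [NormedAddCommGroup V] [NormedSpace ℝ V]
    (hR : 0 < R) (F : E → X → V) (z : E) :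
    radialTruncF R F z = radialCutoff R z • F (radialProj R z) := by
  ext x
  simp only [radialTruncF, radialCutoff, radialProj, radialScale, Pi.smul_apply]
  split_ifs with h₁ h₂
  · rw [Set.projIcc_of_right_le _ ((le_div_iff₀ hR).2 (by linarith)), one_smul, one_smul]
  · rw [Set.projIcc_of_mem _ ⟨div_nonneg (by linarith) hR.le, (div_le_one hR).2 (by linarith)⟩]
  · rw [Set.projIcc_of_le_left _ (div_nonpos_of_nonpos_of_nonneg (by linarith) hR.le),
      zero_smul]

end radialProj

section L2

variable {X V : Type*} [MeasurableSpace X] {ν : Measure X} [NormedAddCommGroup V]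

lemma lintegral_enorm_sq_eq_eLpNorm_sq (f : X → V) :
    ∫⁻ x, ‖f x‖ₑ ^ 2 ∂ν = eLpNorm f 2 ν ^ 2 := by
  simpa using (eLpNorm_nnreal_pow_eq_lintegral (f := f) (μ := ν) (p := 2) two_ne_zero).symm

lemma eLpNorm_two_le_ofReal_sqrt {f : X → V} {a : ℝ}
    (h : ∫⁻ x, ‖f x‖ₑ ^ 2 ∂ν ≤ ENNReal.ofReal a) : eLpNorm f 2 ν ≤ ENNReal.ofReal √a := by
  rw [← ENNReal.pow_le_pow_left_iff two_ne_zero, ← ENNReal.ofReal_pow (Real.sqrt_nonneg _),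
    Real.sq_sqrt', ← lintegral_enorm_sq_eq_eLpNorm_sq]
  exact h.trans (ENNReal.ofReal_le_ofReal (le_max_left _ _))

variable [NormedSpace ℝ V] {E : Type*} [NormedAddCommGroup E] [NormedSpace ℝ E]

theorem eLpNorm_radialTruncF_sub_le {R : ℝ} (hR : 0 < R) {G : E → X → V} {L M : ℝ≥0∞}
    (hG : ∀ z, AEStronglyMeasurable (G z) ν)
    (hLip : ∀ z w, ‖z‖ ≤ R → ‖w‖ ≤ R → eLpNorm (G z - G w) 2 ν ≤ L * ‖z - w‖ₑ)
    (h₀ : eLpNorm (G 0) 2 ν ≤ M) (z w : E) :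
    eLpNorm (radialTruncF R G z - radialTruncF R G w) 2 ν
      ≤ (3 * L + M / ENNReal.ofReal R) * ‖z - w‖ₑ := by
  set p := radialProj R z
  set q := radialProj R w
  set a := radialCutoff R z
  set b := radialCutoff R w
  have hp : ‖p‖ ≤ R := norm_radialProj_le hR.le z
  have hq : ‖q‖ ≤ R := norm_radialProj_le hR.le w
  have hdecomp : radialTruncF R G z - radialTruncF R G w = a • (G p - G q) + (a - b) • G q := by
    rw [radialTruncF_eq_smul hR, radialTruncF_eq_smul hR]; module
  have ha : ‖a‖ₑ ≤ 1 := by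
    rw [Real.enorm_eq_ofReal_abs, ← ENNReal.ofReal_one]
    exact ENNReal.ofReal_le_ofReal (abs_radialCutoff_le_one R z)
  have hab : ‖a - b‖ₑ ≤ ‖z - w‖ₑ / ENNReal.ofReal R := by
    rw [Real.enorm_eq_ofReal_abs, ← ofReal_norm, ← ENNReal.ofReal_div_of_pos hR]
    exact ENNReal.ofReal_le_ofReal (abs_radialCutoff_sub_le hR z w)
  have hpq : ‖p - q‖ₑ ≤ 2 * ‖z - w‖ₑ := by
    rw [← ofReal_norm, ← ofReal_norm, ← ENNReal.ofReal_ofNat 2, ← ENNReal.ofReal_mul zero_le_two]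
    exact ENNReal.ofReal_le_ofReal (norm_radialProj_sub_le hR z w)
  have hGq : eLpNorm (G q) 2 ν ≤ L * ENNReal.ofReal R + M := by
    calc eLpNorm (G q) 2 ν ≤ eLpNorm (G q - G 0) 2 ν + eLpNorm (G 0) 2 ν := by
          simpa using eLpNorm_add_le ((hG q).sub (hG 0)) (hG 0) one_le_two
      _ ≤ L * ‖q - 0‖ₑ + M := by gcongr; exact hLip q 0 hq (by simpa using hR.le)
      _ ≤ L * ENNReal.ofReal R + M := by
          rw [sub_zero, ← ofReal_norm]; gcongr
  calc eLpNorm (radialTruncF R G z - radialTruncF R G w) 2 ν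
      ≤ eLpNorm (a • (G p - G q)) 2 ν + eLpNorm ((a - b) • G q) 2 ν := by
        rw [hdecomp]
        exact eLpNorm_add_le (((hG p).sub (hG q)).const_smul a) ((hG q).const_smul _) one_le_two
    _ = ‖a‖ₑ * eLpNorm (G p - G q) 2 ν + ‖a - b‖ₑ * eLpNorm (G q) 2 ν := by
        rw [eLpNorm_const_smul, eLpNorm_const_smul]
    _ ≤ 1 * (L * (2 * ‖z - w‖ₑ)) + ‖z - w‖ₑ / ENNReal.ofReal R * (L * ENNReal.ofReal R + M) := by
        gcongr
        exact (hLip p q hp hq).trans (by gcongr)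
    _ = (3 * L + M / ENNReal.ofReal R) * ‖z - w‖ₑ := by
        have hr : ENNReal.ofReal R * (ENNReal.ofReal R)⁻¹ = 1 :=
          ENNReal.mul_inv_cancel (ENNReal.ofReal_ne_zero_iff.2 hR) ENNReal.ofReal_ne_top
        rw [div_eq_mul_inv, div_eq_mul_inv]
        calc _ = (2 * L + L * (ENNReal.ofReal R * (ENNReal.ofReal R)⁻¹)
                + M * (ENNReal.ofReal R)⁻¹) * ‖z - w‖ₑ := by ring
          _ = _ := by rw [hr]; ring

end L2

theorem stmt_5_general {X : Type*} [MeasurableSpace X] (ν : Measure X)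
    (d : ℕ) (R C B : ℝ) (hR : 0 < R)
    (F : EuclideanSpace ℝ (Fin d) → X → EuclideanSpace ℝ (Fin d))
    (hmeas : ∀ z, Measurable fun x => F z x)
    (ha : ∀ z₁ z₂ : EuclideanSpace ℝ (Fin d), ‖z₁‖ ≤ R → ‖z₂‖ ≤ R →
      ∫⁻ x, (‖F z₁ x - F z₂ x‖₊ : ENNReal) ^ 2 ∂ν ≤ ENNReal.ofReal (C * ‖z₁ - z₂‖ ^ 2))
    (hb : ∫⁻ x, (‖F 0 x‖₊ : ENNReal) ^ 2 ∂ν ≤ ENNReal.ofReal B) :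
    ∃ K : ℝ, 0 ≤ K ∧ ∀ z₁ z₂ : EuclideanSpace ℝ (Fin d),
      ∫⁻ x, (‖radialTruncF R F z₁ x - radialTruncF R F z₂ x‖₊ : ENNReal) ^ 2 ∂ν
        ≤ ENNReal.ofReal (K * ‖z₁ - z₂‖ ^ 2) := by
  have hLip : ∀ z w : EuclideanSpace ℝ (Fin d), ‖z‖ ≤ R → ‖w‖ ≤ R →
      eLpNorm (F z - F w) 2 ν ≤ ENNReal.ofReal √C * ‖z - w‖ₑ := fun z w hz hw => by
    rw [← ofReal_norm, ← ENNReal.ofReal_mul (Real.sqrt_nonneg C), ← Real.sqrt_sq (norm_nonneg _),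
      ← Real.sqrt_mul' _ (sq_nonneg _)]
    exact eLpNorm_two_le_ofReal_sqrt (ha z w hz hw)
  set K := 3 * ENNReal.ofReal √C + ENNReal.ofReal √B / ENNReal.ofReal R
  have hK : K ≠ ⊤ := by
    simp [K, ENNReal.div_eq_top, ENNReal.mul_eq_top, hR]
  refine ⟨K.toReal ^ 2, by positivity, fun z₁ z₂ => ?_⟩
  calc ∫⁻ x, (‖radialTruncF R F z₁ x - radialTruncF R F z₂ x‖₊ : ENNReal) ^ 2 ∂ν
      = eLpNorm (radialTruncF R F z₁ - radialTruncF R F z₂) 2 ν ^ 2 :=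
        lintegral_enorm_sq_eq_eLpNorm_sq _
    _ ≤ (K * ‖z₁ - z₂‖ₑ) ^ 2 := by
        gcongr
        exact eLpNorm_radialTruncF_sub_le hR (fun z => (hmeas z).aestronglyMeasurable) hLip
          (eLpNorm_two_le_ofReal_sqrt hb) z₁ z₂
    _ = ENNReal.ofReal (K.toReal ^ 2 * ‖z₁ - z₂‖ ^ 2) := by
        rw [ENNReal.ofReal_mul (by positivity), ENNReal.ofReal_pow ENNReal.toReal_nonneg,
          ENNReal.ofReal_pow (norm_nonneg _), ENNReal.ofReal_toReal hK, ofReal_norm, mul_pow]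

theorem stmt_5 {X : Type*} [MeasurableSpace X] (ν : Measure X)
    (d : ℕ) (hd : 0 < d) (R C B : ℝ) (hR : 0 < R) (hC : 0 ≤ C) (hB : 0 ≤ B)
    (F : EuclideanSpace ℝ (Fin d) → X → EuclideanSpace ℝ (Fin d))
    (hmeas : ∀ z, Measurable fun x => F z x)
    (ha : ∀ z₁ z₂ : EuclideanSpace ℝ (Fin d), ‖z₁‖ ≤ R → ‖z₂‖ ≤ R →
      ∫⁻ x, (‖F z₁ x - F z₂ x‖₊ : ENNReal) ^ 2 ∂ν ≤ ENNReal.ofReal (C * ‖z₁ - z₂‖ ^ 2))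
    (hb : ∫⁻ x, (‖F 0 x‖₊ : ENNReal) ^ 2 ∂ν ≤ ENNReal.ofReal B) :
    ∃ K : ℝ, 0 ≤ K ∧ ∀ z₁ z₂ : EuclideanSpace ℝ (Fin d),
      ∫⁻ x, (‖radialTruncF R F z₁ x - radialTruncF R F z₂ x‖₊ : ENNReal) ^ 2 ∂ν
        ≤ ENNReal.ofReal (K * ‖z₁ - z₂‖ ^ 2) :=
  stmt_5_general ν d R C B hR F hmeas ha hb
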